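/- Fix m ≥ 0 and reals α_S, α_B, α_L, α_{B_m}, α_{L_m} > 0 and P₁,…,P₅ > 0 with P₁ + ⋯ + P₅ = 1 and P₁ > P₂ + P₃, and let G₀ be the (2m+3)×(2m+3) matrix with rows/columns indexed 0,…,2m+2 and nonzero entries: G₀[0,0] = α_S(P₁−P₂−P₃); G₀[1,0] = α_S(2P₂+P₄); G₀[m+2,0] = α_S(2P₃+P₅); G₀[i,i] = −α_B for 1 ≤ i ≤ m and G₀[m+1,m+1] = −α_{B_m}; G₀[i+1,i] = 2α_B for 1 ≤ i ≤ m; G₀[m+2+j,m+2+j] = −α_L for 0 ≤ j ≤ m−1 and G₀[2m+2,2m+2] = −α_{L_m}; G₀[m+3+j,m+2+j] = 2α_L for 0 ≤ j ≤ m−1; all other entries zero. Set λ₁ = α_S(P₁−P₂−P₃) and let μ be the unique vector with G₀μ = λ₁μ, all entries of μ strictly positive, and ∑_i μ_i = 1. Let W be the sum of the generalized eigenspaces of G₀ for eigenvalues other than λ₁, and let X₀ = cμ + w with c > 0 and w ∈ W. Then there exists T such that ∑_i (exp(tG₀)X₀)_i > 0 for all t ≥ T, and exp(tG₀)X₀ /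 (∑_i (exp(tG₀)X₀)_i) → μ as t → ∞. -/

import Mathlib

open Filter Topology

section Aux

variable {N : ℕ}

lemma exp_mulVec_tsum (B : Matrix (Fin N) (Fin N) ℝ) (v : Fin N → ℝ) :
    (NormedSpace.exp B).mulVec v
      = ∑' n : ℕ, ((n.factorial : ℝ)⁻¹) • (B ^ n).mulVec v := by
  letI : SeminormedRing (Matrix (Fin N) (Fin N) ℝ) := Matrix.linftyOpSemiNormedRing
  letI : NormedRing (Matrix (Fin N) (Fin N) ℝ) := Matrix.linftyOpNormedRing
  letI : NormedAlgebra ℝ (Matrix (Fin N) (Fin N) ℝ) := Matrix.linftyOpNormedAlgebra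
  let φ : Matrix (Fin N) (Fin N) ℝ →ₗ[ℝ] (Fin N → ℝ) :=
    { toFun := fun M => M.mulVec v
      map_add' := fun M₁ M₂ => Matrix.add_mulVec M₁ M₂ v
      map_smul' := fun a M => Matrix.smul_mulVec a M v }
  have hsum : Summable (fun n : ℕ => ((n.factorial : ℝ)⁻¹) • B ^ n) :=
    NormedSpace.expSeries_summable' (𝕂 := ℝ) B
  have hmap := (LinearMap.toContinuousLinearMap φ).map_tsum hsum
  rw [NormedSpace.exp_eq_tsum ℝ]
  refine hmap.trans (tsum_congr fun n => ?_)
  simp [φ, Matrix.smul_mulVec]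

lemma exp_mulVec_eig (B : Matrix (Fin N) (Fin N) ℝ) {v : Fin N → ℝ} {a : ℝ}
    (h : B.mulVec v = a • v) :
    (NormedSpace.exp B).mulVec v = Real.exp a • v := by
  have hpow : ∀ n : ℕ, (B ^ n).mulVec v = a ^ n • v := by
    intro n
    induction n with
    | zero => simp [Matrix.one_mulVec]
    | succ n ih =>
        rw [pow_succ, ← Matrix.mulVec_mulVec, h, Matrix.mulVec_smul, ih, smul_smul,
          mul_comm, ← pow_succ]
  rw [exp_mulVec_tsum]
  have h1 : ∀ n : ℕ, ((n.factorial : ℝ)⁻¹) • (B ^ n).mulVec v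
      = (((n.factorial : ℝ)⁻¹) * a ^ n) • v := by
    intro n; rw [hpow, smul_smul]
  rw [tsum_congr h1, Summable.tsum_smul_const]
  · congr 1
    rw [Real.exp_eq_exp_ℝ, NormedSpace.exp_eq_tsum ℝ]
    simp [smul_eq_mul]
  · simpa [smul_eq_mul] using NormedSpace.expSeries_summable' (𝕂 := ℝ) a

lemma exp_mulVec_nilp (B : Matrix (Fin N) (Fin N) ℝ) (z : ℝ) (v : Fin N → ℝ) (K : ℕ)
    (h : ((B - z • 1) ^ K).mulVec v = 0) :
    (NormedSpace.exp B).mulVec v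
      = Real.exp z •
          ∑ k ∈ Finset.range K, ((k.factorial : ℝ)⁻¹) • ((B - z • 1) ^ k).mulVec v := by
  have hB : B = z • (1 : Matrix (Fin N) (Fin N) ℝ) + (B - z • 1) := by abel
  have hcomm : Commute (z • (1 : Matrix (Fin N) (Fin N) ℝ)) (B - z • 1) :=
    (Commute.one_left _).smul_left z
  have hexp : NormedSpace.exp B
      = NormedSpace.exp (z • (1 : Matrix (Fin N) (Fin N) ℝ)) *
          NormedSpace.exp (B - z • 1) := by
    conv_lhs => rw [hB]
    exact Matrix.exp_add_of_commute _ _ hcomm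
  rw [hexp, ← Matrix.mulVec_mulVec]
  have hnil : (NormedSpace.exp (B - z • 1)).mulVec v
      = ∑ k ∈ Finset.range K, ((k.factorial : ℝ)⁻¹) • ((B - z • 1) ^ k).mulVec v := by
    rw [exp_mulVec_tsum]
    refine tsum_eq_sum fun n hn => ?_
    have hnK : K ≤ n := by simpa using hn
    have : (B - z • 1) ^ n = (B - z • 1) ^ (n - K) * (B - z • 1) ^ K := by
      rw [← pow_add]; congr 1; omega
    rw [this, ← Matrix.mulVec_mulVec, h, Matrix.mulVec_zero, smul_zero]
  rw [hnil]
  refine exp_mulVec_eig _ ?_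
  rw [Matrix.smul_mulVec, Matrix.one_mulVec]

lemma toLin'_pow_apply (M : Matrix (Fin N) (Fin N) ℝ) (K : ℕ) (y : Fin N → ℝ) :
    ((Matrix.toLin' M) ^ K) y = (M ^ K).mulVec y := by
  induction K with
  | zero => simp
  | succ K ih =>
      rw [pow_succ', pow_succ', Module.End.mul_apply, ih, Matrix.toLin'_apply,
        Matrix.mulVec_mulVec]

lemma tendsto_exp_mul_pow {b : ℝ} (hb : b < 0) (k : ℕ) :
    Tendsto (fun t : ℝ => Real.exp (b * t) * t ^ k) atTop (𝓝 0) := by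
  have h1 : Tendsto (fun t : ℝ => -b * t) atTop atTop :=
    Tendsto.const_mul_atTop (by linarith) tendsto_id
  have h2 := (Real.tendsto_pow_mul_exp_neg_atTop_nhds_zero k).comp h1
  have h3 := h2.const_mul (((-b) ^ k)⁻¹)
  rw [mul_zero] at h3
  refine h3.congr fun t => ?_
  have hbne : ((-b) ^ k : ℝ) ≠ 0 := pow_ne_zero _ (by linarith)
  simp only [Function.comp_apply]
  have harg : -(-b * t) = b * t := by ring
  rw [harg, mul_pow, show (-b) ^ k * t ^ k * Real.exp (b * t)
      = (-b) ^ k * (t ^ k * Real.exp (b * t)) by ring,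
    inv_mul_cancel_left₀ hbne, mul_comm]

lemma tendsto_exp_smul_zero_of_mem (A : Matrix (Fin N) (Fin N) ℝ) (lam : ℝ)
    (hspec : ∀ z : ℝ, z ≠ lam → ∀ x : Fin N → ℝ, x ≠ 0 → ∀ K : ℕ,
      ((A - z • 1) ^ K).mulVec x = 0 → z < lam)
    (w : Fin N → ℝ)
    (hw : w ∈ ⨆ (z : ℝ) (_ : z ≠ lam),
      Module.End.maxGenEigenspace (Matrix.toLin' A) z) :
    Tendsto (fun t : ℝ => Real.exp (-(lam * t)) • (NormedSpace.exp (t • A)).mulVec w)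
      atTop (𝓝 0) := by
  let S : Submodule ℝ (Fin N → ℝ) :=
    { carrier := {x | Tendsto
        (fun t : ℝ => Real.exp (-(lam * t)) • (NormedSpace.exp (t • A)).mulVec x)
        atTop (𝓝 0)}
      add_mem' := by
        intro a b ha hb
        have h := ha.add hb
        rw [add_zero] at h
        refine h.congr fun t => ?_
        rw [← smul_add, ← Matrix.mulVec_add]
      zero_mem' := by
        simpa [Matrix.mulVec_zero] using
          (tendsto_const_nhds : Tendsto (fun _ : ℝ => (0 : Fin N → ℝ)) atTop (𝓝 0))
      smul_mem' := by
        intro r x hx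
        have h := hx.const_smul r
        rw [smul_zero] at h
        refine h.congr fun t => ?_
        rw [Matrix.mulVec_smul, smul_comm] }
  have hle : (⨆ (z : ℝ) (_ : z ≠ lam),
      Module.End.maxGenEigenspace (Matrix.toLin' A) z) ≤ S := by
    refine iSup_le fun z => iSup_le fun hz => ?_
    intro x hx
    by_cases hx0 : x = 0
    · rw [hx0]; exact S.zero_mem
    rw [Module.End.mem_maxGenEigenspace] at hx
    obtain ⟨K, hK⟩ := hx
    have hend : Matrix.toLin' A - z • (1 : Module.End ℝ (Fin N → ℝ))
        = Matrix.toLin' (A - z • 1) := by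
      refine LinearMap.ext fun y => ?_
      simp [Matrix.toLin'_apply, Matrix.sub_mulVec, Matrix.smul_mulVec,
        Matrix.one_mulVec]
    rw [hend, toLin'_pow_apply] at hK
    have hzlt : z < lam := hspec z hz x hx0 K hK
    have key : ∀ t : ℝ,
        Real.exp (-(lam * t)) • (NormedSpace.exp (t • A)).mulVec x
        = ∑ k ∈ Finset.range K,
            (Real.exp ((z - lam) * t) * (((k.factorial : ℝ))⁻¹ * t ^ k)) •
              ((A - z • 1) ^ k).mulVec x := by
      intro t
      have h1 : t • A - (t * z) • (1 : Matrix (Fin N) (Fin N) ℝ) = t • (A - z • 1) := by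
        rw [smul_sub, mul_smul]
      have hnil : ((t • A - (t * z) • (1 : Matrix (Fin N) (Fin N) ℝ)) ^ K).mulVec x = 0 := by
        rw [h1, smul_pow, Matrix.smul_mulVec, hK, smul_zero]
      rw [exp_mulVec_nilp (t • A) (t * z) x K hnil, smul_smul, Finset.smul_sum]
      refine Finset.sum_congr rfl fun k _ => ?_
      rw [h1, smul_pow, Matrix.smul_mulVec, smul_smul, smul_smul]
      congr 1
      rw [← Real.exp_add]
      ring_nf
    have hlim : Tendsto (fun t : ℝ => ∑ k ∈ Finset.range K,
        (Real.exp ((z - lam) * t) * (((k.factorial : ℝ))⁻¹ * t ^ k)) •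
          ((A - z • 1) ^ k).mulVec x) atTop (𝓝 0) := by
      have : (0 : Fin N → ℝ) = ∑ k ∈ Finset.range K, (0 : Fin N → ℝ) := by simp
      rw [this]
      refine tendsto_finset_sum _ fun k _ => ?_
      have hb : z - lam < 0 := by linarith
      have h2 := ((tendsto_exp_mul_pow hb k).const_mul
        (((k.factorial : ℝ))⁻¹)).smul_const (((A - z • 1) ^ k).mulVec x)
      rw [mul_zero, zero_smul] at h2
      refine h2.congr fun t => ?_
      congr 1
      ring
    exact (Tendsto.congr (fun t => (key t).symm) hlim)
  exact hle hw
end Aux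

/-- The mean-dynamics matrix `G₀` of the multi-phenotype branching model *without*
phenotypic plasticity (Eq. (15) of the paper).  Index `0` is the stem-like phenotype S,
indices `1,…,m+1` are basal cells `B₀,…,B_m`, indices `m+2,…,2m+2` are luminal cells
`L₀,…,L_m`. -/
def G₀ (m : ℕ) (αS αB αL αBm αLm P1 P2 P3 P4 P5 : ℝ) :
    Matrix (Fin (2 * m + 3)) (Fin (2 * m + 3)) ℝ :=
  Matrix.of fun i j =>
    if i.val = 0 ∧ j.val = 0 then αS * (P1 - P2 - P3)
    else if i.val = 1 ∧ j.val = 0 then αS * (2 * P2 + P4)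
    else if i.val = m + 2 ∧ j.val = 0 then αS * (2 * P3 + P5)
    else if i.val = j.val ∧ 1 ≤ i.val ∧ i.val ≤ m then -αB
    else if i.val = m + 1 ∧ j.val = m + 1 then -αBm
    else if i.val = j.val + 1 ∧ 1 ≤ j.val ∧ j.val ≤ m then 2 * αB
    else if i.val = j.val ∧ m + 2 ≤ i.val ∧ i.val ≤ 2 * m + 1 then -αL
    else if i.val = 2 * m + 2 ∧ j.val = 2 * m + 2 then -αLm
    else if i.val = j.val + 1 ∧ m + 2 ≤ j.val ∧ j.val ≤ 2 * m + 1 then 2 * αL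
    else 0


section G0

variable (m : ℕ) (αS αB αL αBm αLm P1 P2 P3 P4 P5 : ℝ)

lemma G₀_lower : ∀ i j : Fin (2 * m + 3), (i : ℕ) < (j : ℕ) →
    G₀ m αS αB αL αBm αLm P1 P2 P3 P4 P5 i j = 0 := by
  intro i j hij
  simp only [G₀, Matrix.of_apply]
  split_ifs <;> first | rfl | (exfalso; omega)

lemma G₀_diag_zero (i : Fin (2 * m + 3)) (hi : (i : ℕ) = 0) :
    G₀ m αS αB αL αBm αLm P1 P2 P3 P4 P5 i i = αS * (P1 - P2 - P3) := by
  simp only [G₀, Matrix.of_apply]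
  rw [if_pos ⟨hi, hi⟩]

lemma G₀_diag_neg (hαB : 0 < αB) (hαL : 0 < αL) (hαBm : 0 < αBm) (hαLm : 0 < αLm)
    (i : Fin (2 * m + 3)) (hi : (i : ℕ) ≠ 0) :
    G₀ m αS αB αL αBm αLm P1 P2 P3 P4 P5 i i < 0 := by
  have hlt := i.isLt
  simp only [G₀, Matrix.of_apply]
  split_ifs <;> first | (exfalso; omega) | (exfalso; simp only [true_and] at *; omega) | linarith

lemma G₀_eig_lt (hαS : 0 < αS) (hαB : 0 < αB) (hαL : 0 < αL) (hαBm : 0 < αBm)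
    (hαLm : 0 < αLm) (hdom : P2 + P3 < P1)
    (z : ℝ) (hz : z ≠ αS * (P1 - P2 - P3)) (x : Fin (2 * m + 3) → ℝ) (hx : x ≠ 0) (K : ℕ)
    (hK : ((G₀ m αS αB αL αBm αLm P1 P2 P3 P4 P5 - z • 1) ^ K).mulVec x = 0) :
    z < αS * (P1 - P2 - P3) := by
  have hA : True := trivial
  let A := G₀ m αS αB αL αBm αLm P1 P2 P3 P4 P5
  show z < αS * (P1 - P2 - P3)
  have hlampos : 0 < αS * (P1 - P2 - P3) := mul_pos hαS (by linarith)
  have hKne : K ≠ 0 := by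
    rintro rfl
    rw [pow_zero, Matrix.one_mulVec] at hK
    exact hx hK
  have hdet : (A - z • 1).det = 0 := by
    have h0 : ((A - z • 1) ^ K).det = 0 := Matrix.exists_mulVec_eq_zero_iff.mp ⟨x, hx, hK⟩
    rw [Matrix.det_pow] at h0
    exact (pow_eq_zero_iff hKne).mp h0
  have htri : (A - z • 1).BlockTriangular OrderDual.toDual := by
    intro i j hij
    have hij' : (i : ℕ) < (j : ℕ) := hij
    have hne : i ≠ j := by
      intro h; rw [h] at hij'; exact lt_irrefl _ hij'
    simp only [Matrix.sub_apply, Matrix.smul_apply, Matrix.one_apply_ne hne,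
      smul_eq_mul, mul_zero, sub_zero]
    exact G₀_lower m αS αB αL αBm αLm P1 P2 P3 P4 P5 i j hij'
  rw [Matrix.det_of_lowerTriangular _ htri] at hdet
  obtain ⟨i, -, hi⟩ := Finset.prod_eq_zero_iff.mp hdet
  have hzi : z = A i i := by
    have : A i i - z * 1 = 0 := by
      simpa [Matrix.sub_apply, Matrix.smul_apply, Matrix.one_apply_eq] using hi
    linarith
  by_cases h0 : (i : ℕ) = 0
  · exact absurd (hzi.trans (G₀_diag_zero m αS αB αL αBm αLm P1 P2 P3 P4 P5 i h0)) hz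
  · have hneg : A i i < 0 :=
      G₀_diag_neg m αS αB αL αBm αLm P1 P2 P3 P4 P5 hαB hαL hαBm hαLm i h0
    rw [← hzi] at hneg
    linarith

end G0

/-- (Deterministic counterpart of Theorem 3 of the paper.)  For the
no-plasticity matrix `G₀` with positive rates, positive division probabilities summing
to one and `P₁ > P₂ + P₃`, set `λ₁ = α_S(P₁−P₂−P₃)` and let `μ` be the unique strictly
positive normalized eigenvector with `G₀μ = λ₁μ`.  Let `W` be the sum of the generalized
eigenspaces of `G₀` for eigenvalues other than `λ₁`, and `X₀ = c•μ + w` with `c > 0`,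
`w ∈ W`.  Then eventually `∑ i, (exp(tG₀)X₀) i > 0`, and
`exp(tG₀)X₀ / ∑ i, (exp(tG₀)X₀) i → μ` as `t → ∞`. -/
theorem stmt14 (m : ℕ) (αS αB αL αBm αLm P1 P2 P3 P4 P5 : ℝ)
    (hαS : 0 < αS) (hαB : 0 < αB) (hαL : 0 < αL) (hαBm : 0 < αBm) (hαLm : 0 < αLm)
    (hP1 : 0 < P1) (hP2 : 0 < P2) (hP3 : 0 < P3) (hP4 : 0 < P4) (hP5 : 0 < P5)
    (hPsum : P1 + P2 + P3 + P4 + P5 = 1) (hdom : P2 + P3 < P1)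
    (lam₁ : ℝ) (hlam₁ : lam₁ = αS * (P1 - P2 - P3))
    (μ : Fin (2 * m + 3) → ℝ)
    (hμ : (G₀ m αS αB αL αBm αLm P1 P2 P3 P4 P5).mulVec μ = lam₁ • μ)
    (hμpos : ∀ i, 0 < μ i) (hμsum : (∑ i, μ i) = 1)
    (hμuniq : ∀ ν : Fin (2 * m + 3) → ℝ,
      (G₀ m αS αB αL αBm αLm P1 P2 P3 P4 P5).mulVec ν = lam₁ • ν →
      (∀ i, 0 < ν i) → (∑ i, ν i) = 1 → ν = μ)
    (W : Submodule ℝ (Fin (2 * m + 3) → ℝ))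
    (hW : W = ⨆ (z : ℝ) (_ : z ≠ lam₁),
      Module.End.maxGenEigenspace
        (Matrix.toLin' (G₀ m αS αB αL αBm αLm P1 P2 P3 P4 P5)) z)
    (X₀ : Fin (2 * m + 3) → ℝ) (c : ℝ) (hc : 0 < c)
    (w : Fin (2 * m + 3) → ℝ) (hw : w ∈ W) (hX₀ : X₀ = c • μ + w) :
    ∃ T : ℝ,
      (∀ t ≥ T, 0 <
        ∑ i, (NormedSpace.exp (t • G₀ m αS αB αL αBm αLm P1 P2 P3 P4 P5)).mulVec X₀ i) ∧
      Tendsto (fun t : ℝ =>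
          (∑ i, (NormedSpace.exp (t • G₀ m αS αB αL αBm αLm P1 P2 P3 P4 P5)).mulVec X₀ i)⁻¹ •
            (NormedSpace.exp (t • G₀ m αS αB αL αBm αLm P1 P2 P3 P4 P5)).mulVec X₀)
        atTop (𝓝 μ) := by
  have hlampos : 0 < lam₁ := by rw [hlam₁]; exact mul_pos hαS (by linarith)
  have hspec : ∀ z : ℝ, z ≠ lam₁ → ∀ x : Fin (2 * m + 3) → ℝ, x ≠ 0 → ∀ K : ℕ,
      ((G₀ m αS αB αL αBm αLm P1 P2 P3 P4 P5 - z • 1) ^ K).mulVec x = 0 → z < lam₁ := by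
    intro z hz x hx K hK
    rw [hlam₁] at hz ⊢
    exact G₀_eig_lt m αS αB αL αBm αLm P1 P2 P3 P4 P5 hαS hαB hαL hαBm hαLm hdom
      z hz x hx K hK
  have hw' : w ∈ ⨆ (z : ℝ) (_ : z ≠ lam₁),
      Module.End.maxGenEigenspace (Matrix.toLin' (G₀ m αS αB αL αBm αLm P1 P2 P3 P4 P5)) z := hW ▸ hw
  have hr : Tendsto (fun t : ℝ =>
      Real.exp (-(lam₁ * t)) • (NormedSpace.exp (t • G₀ m αS αB αL αBm αLm P1 P2 P3 P4 P5)).mulVec w) atTop (𝓝 0) :=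
    tendsto_exp_smul_zero_of_mem _ lam₁ hspec w hw'
  have hμt : ∀ t : ℝ, (NormedSpace.exp (t • G₀ m αS αB αL αBm αLm P1 P2 P3 P4 P5)).mulVec μ = Real.exp (lam₁ * t) • μ := by
    intro t
    refine exp_mulVec_eig _ ?_
    rw [Matrix.smul_mulVec, hμ, smul_smul, mul_comm t lam₁]
  have hY : ∀ t : ℝ, (NormedSpace.exp (t • G₀ m αS αB αL αBm αLm P1 P2 P3 P4 P5)).mulVec X₀
      = Real.exp (lam₁ * t) • (c • μ +
          Real.exp (-(lam₁ * t)) • (NormedSpace.exp (t • G₀ m αS αB αL αBm αLm P1 P2 P3 P4 P5)).mulVec w) := by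
    intro t
    rw [hX₀, Matrix.mulVec_add, Matrix.mulVec_smul, hμt t, smul_add,
      smul_comm (Real.exp (lam₁ * t)) c, smul_smul (Real.exp (lam₁ * t)),
      ← Real.exp_add, add_neg_cancel, Real.exp_zero, one_smul]
  have hrsum : Tendsto (fun t : ℝ =>
      ∑ i, (Real.exp (-(lam₁ * t)) • (NormedSpace.exp (t • G₀ m αS αB αL αBm αLm P1 P2 P3 P4 P5)).mulVec w) i)
      atTop (𝓝 0) := by
    have h0 : (0 : ℝ) = ∑ _i : Fin (2 * m + 3), (0 : ℝ) := by simp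
    rw [h0]
    refine tendsto_finset_sum _ fun i _ => ?_
    simpa using tendsto_pi_nhds.mp hr i
  have hq : Tendsto (fun t : ℝ => c +
      ∑ i, (Real.exp (-(lam₁ * t)) • (NormedSpace.exp (t • G₀ m αS αB αL αBm αLm P1 P2 P3 P4 P5)).mulVec w) i)
      atTop (𝓝 c) := by
    simpa using tendsto_const_nhds.add hrsum
  have hsum_eq : ∀ t : ℝ, (∑ i, (NormedSpace.exp (t • G₀ m αS αB αL αBm αLm P1 P2 P3 P4 P5)).mulVec X₀ i)
      = Real.exp (lam₁ * t) * (c +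
        ∑ i, (Real.exp (-(lam₁ * t)) • (NormedSpace.exp (t • G₀ m αS αB αL αBm αLm P1 P2 P3 P4 P5)).mulVec w) i) := by
    intro t
    rw [show (fun i => (NormedSpace.exp (t • G₀ m αS αB αL αBm αLm P1 P2 P3 P4 P5)).mulVec X₀ i)
        = fun i => (NormedSpace.exp (t • G₀ m αS αB αL αBm αLm P1 P2 P3 P4 P5)).mulVec X₀ i from rfl]
    simp only [hY t, Pi.smul_apply, Pi.add_apply, smul_eq_mul]
    rw [← Finset.mul_sum]
    congr 1
    rw [Finset.sum_add_distrib, ← Finset.mul_sum, hμsum, mul_one]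
  have hqpos : ∀ᶠ t : ℝ in atTop, 0 < c +
      ∑ i, (Real.exp (-(lam₁ * t)) • (NormedSpace.exp (t • G₀ m αS αB αL αBm αLm P1 P2 P3 P4 P5)).mulVec w) i :=
    hq.eventually (eventually_gt_nhds hc)
  obtain ⟨T, hT⟩ := eventually_atTop.mp hqpos
  refine ⟨T, fun t ht => ?_, ?_⟩
  · rw [hsum_eq t]
    exact mul_pos (Real.exp_pos _) (hT t ht)
  · have heq : ∀ t : ℝ,
        (∑ i, (NormedSpace.exp (t • G₀ m αS αB αL αBm αLm P1 P2 P3 P4 P5)).mulVec X₀ i)⁻¹ •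
            (NormedSpace.exp (t • G₀ m αS αB αL αBm αLm P1 P2 P3 P4 P5)).mulVec X₀
        = (c + ∑ i, (Real.exp (-(lam₁ * t)) •
              (NormedSpace.exp (t • G₀ m αS αB αL αBm αLm P1 P2 P3 P4 P5)).mulVec w) i)⁻¹ •
            (c • μ + Real.exp (-(lam₁ * t)) • (NormedSpace.exp (t • G₀ m αS αB αL αBm αLm P1 P2 P3 P4 P5)).mulVec w) := by
      intro t
      rw [hsum_eq t, hY t, mul_inv, smul_smul,
        mul_comm ((Real.exp (lam₁ * t))⁻¹), mul_assoc,
        inv_mul_cancel₀ (Real.exp_ne_zero _), mul_one]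
    have hvec : Tendsto (fun t : ℝ => c • μ +
        Real.exp (-(lam₁ * t)) • (NormedSpace.exp (t • G₀ m αS αB αL αBm αLm P1 P2 P3 P4 P5)).mulVec w)
        atTop (𝓝 (c • μ)) := by
      simpa using (tendsto_const_nhds : Tendsto (fun _ : ℝ => c • μ) atTop _).add hr
    have hlim := (hq.inv₀ hc.ne').smul hvec
    rw [smul_smul, inv_mul_cancel₀ hc.ne', one_smul] at hlim
    exact Tendsto.congr (fun t => (heq t).symm) hlim
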